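/- Let x, y ∈ ℂ^n with x ≠ 0, and let ε, δ ∈ (0,1). Set n₀ = ⌈9/ε²⌉ and m = ⌈6·log(2/δ)⌉. Let (i_{j,t}), for j ∈ [m], t ∈ [n₀], be i.i.d. indices drawn from the ℓ²-sampling distribution of x, and set z_{j,t} = conj(x_{i_{j,t}}) · y_{i_{j,t}} · ‖x‖²/|x_{i_{j,t}}|². Let Y_j = (1/n₀) Σ_t z_{j,t}, and let Y ∈ ℂ be formed by taking a median of the real parts of Y_1,…,Y_m as real part and a median of the imaginary parts as imaginary part. Then P(|Y − ⟨x, y⟩| ≤ ε·√2·‖x‖·‖y‖) ≥ 1 − δ, where ⟨x,y⟩ = Σ conj(x_i) y_i. -/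

import Mathlib

/-!
Sampling `s` with probability `‖x s‖² / ‖x‖²` makes `conj (x s) * y s * ‖x‖² / ‖x s‖²` an
unbiased estimator of `⟨x, y⟩` with second moment at most `‖x‖² ‖y‖²`. By Chebyshev, the real
part of a group mean of `n₀ ≥ 9 / ε²` samples misses `Re ⟨x, y⟩` by more than `ε ‖x‖ ‖y‖` with
probability at most `1/9`, and likewise the imaginary part. A median misses by more only if at
least `⌈m/2⌉` of the `m` independent groups do; a union bound over the `⌈m/2⌉`-subsets of groups
bounds this by `2^m 9^(-m/2) = (2/3)^m ≤ δ/2`. Both parts within `ε ‖x‖ ‖y‖` give the factor `√2`.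
-/

open MeasureTheory ProbabilityTheory Finset
open scoped ENNReal

lemma ProbabilityTheory.iIndepFun.curry {Ω ι κ 𝓧 : Type*} [MeasurableSpace Ω] {μ : Measure Ω}
    [IsProbabilityMeasure μ] [MeasurableSpace 𝓧] {X : ι → κ → Ω → 𝓧}
    (hX : ∀ i j, Measurable (X i j)) (h : iIndepFun (fun p : ι × κ ↦ X p.1 p.2) μ) :
    iIndepFun (fun i ω j ↦ X i j ω) μ := by
  have hblock (i : ι) : μ.map (fun ω j ↦ X i j ω) = Measure.infinitePi (fun j ↦ μ.map (X i j)) :=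
    (iIndepFun_iff_map_fun_eq_infinitePi_map (hX i)).1
      (h.precomp (g := Prod.mk i) (Prod.mk_right_injective i))
  have : ∀ i j, IsProbabilityMeasure (μ.map (X i j)) :=
    fun i j ↦ Measure.isProbabilityMeasure_map (hX i j).aemeasurable
  rw [iIndepFun_iff_map_fun_eq_infinitePi_map (fun i ↦ by fun_prop)]
  simp_rw [hblock]
  rw [← Measure.infinitePi_map_curry,
    ← (iIndepFun_iff_map_fun_eq_infinitePi_map (fun p : ι × κ ↦ hX p.1 p.2)).1 h,
    Measure.map_map (by fun_prop) (by fun_prop)]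
  rfl

lemma ProbabilityTheory.iIndepFun.measure_le_card_mem_le {Ω ι β : Type*} [MeasurableSpace Ω]
    {μ : Measure Ω} [Fintype ι] [MeasurableSpace β] {V : ι → Ω → β} (hV : iIndepFun V μ)
    {B : Set β} [DecidablePred (· ∈ B)] (hB : MeasurableSet B) {p : ℝ≥0∞}
    (hp : ∀ i, μ (V i ⁻¹' B) ≤ p) (k : ℕ) :
    μ {ω | k ≤ #{i | V i ω ∈ B}} ≤ (Fintype.card ι).choose k * p ^ k := by
  classical
  have hcover : {ω | k ≤ #{i | V i ω ∈ B}} ⊆ ⋃ T ∈ powersetCard k univ, ⋂ i ∈ T, V i ⁻¹' B := by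
    intro ω hω
    obtain ⟨T, hT, hTk⟩ := exists_subset_card_eq hω
    simp only [Set.mem_iUnion, Set.mem_iInter, mem_powersetCard]
    exact ⟨T, ⟨subset_univ T, hTk⟩, fun i hi ↦ (mem_filter.1 (hT hi)).2⟩
  calc μ {ω | k ≤ #{i | V i ω ∈ B}}
      ≤ ∑ T ∈ powersetCard k univ, μ (⋂ i ∈ T, V i ⁻¹' B) :=
        (measure_mono hcover).trans (measure_biUnion_finset_le _ _)
    _ = ∑ T ∈ powersetCard k univ, ∏ i ∈ T, μ (V i ⁻¹' B) :=
        sum_congr rfl fun T _ ↦ hV.meas_biInter fun i _ ↦ ⟨B, hB, rfl⟩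
    _ ≤ ∑ T ∈ powersetCard k (univ : Finset ι), p ^ k :=
        sum_le_sum fun T hT ↦ (mem_powersetCard.1 hT).2 ▸ prod_le_pow_card _ _ _ fun i _ ↦ hp i
    _ = (Fintype.card ι).choose k * p ^ k := by simp [card_powersetCard]

section Probability

variable {Ω : Type*} [MeasurableSpace Ω] {μ : Measure Ω}

lemma variance_mean_le {ι : Type*} [Fintype ι] {X : ι → Ω → ℝ} (hX : ∀ i, MemLp (X i) 2 μ)
    (hindep : Pairwise fun i j ↦ X i ⟂ᵢ[μ] X j) {V : ℝ} (hV : ∀ i, Var[X i; μ] ≤ V) :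
    Var[fun ω ↦ (Fintype.card ι : ℝ)⁻¹ * ∑ i, X i ω; μ] ≤ V / Fintype.card ι := by
  have hsum : Var[fun ω ↦ ∑ i, X i ω; μ] = ∑ i, Var[X i; μ] := by
    rw [← IndepFun.variance_sum (fun i _ ↦ hX i) fun i _ j _ hij ↦ hindep hij]
    congr 1
    ext ω
    simp
  rw [variance_const_mul, hsum]
  calc ((Fintype.card ι : ℝ)⁻¹) ^ 2 * ∑ i, Var[X i; μ]
      ≤ ((Fintype.card ι : ℝ)⁻¹) ^ 2 * (Fintype.card ι * V) := by
        gcongr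
        simpa using sum_le_sum fun i (_ : i ∈ univ) ↦ hV i
    _ = V / Fintype.card ι := by
        rcases (Nat.cast_nonneg (α := ℝ) (Fintype.card ι)).eq_or_lt with h | h
        · simp [← h]
        · field_simp

variable [IsProbabilityMeasure μ]

lemma integral_comp_eq_sum_measureReal {α : Type*} [Fintype α] [MeasurableSpace α]
    [MeasurableSingletonClass α] {U : Ω → α} (hU : Measurable U) (g : α → ℝ) :
    ∫ ω, g (U ω) ∂μ = ∑ a, μ.real (U ⁻¹' {a}) * g a := by
  rw [← integral_map hU.aemeasurable (by fun_prop), integral_fintype .of_finite]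
  simp [map_measureReal_apply hU]

lemma measure_lt_abs_sub_integral_le {X : Ω → ℝ} (hX : MemLp X 2 μ) {c r : ℝ} (hc : 0 ≤ c)
    (hvar : Var[X; μ] ≤ r * c ^ 2) :
    μ {ω | c < |X ω - μ[X]|} ≤ ENNReal.ofReal r := by
  rcases hc.eq_or_lt with rfl | hc
  · have hconst : ∀ᵐ ω ∂μ, X ω = μ[X] := ae_eq_integral_of_variance_eq_zero hX
      (le_antisymm (by simpa using hvar) (variance_nonneg X μ))
    refine le_of_eq_of_le (measure_mono_null (fun ω hω ↦ ?_) (ae_iff.1 hconst)) zero_le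
    simpa [sub_eq_zero] using hω
  calc μ {ω | c < |X ω - μ[X]|} ≤ μ {ω | c ≤ |X ω - μ[X]|} :=
        measure_mono fun ω (hω : c < _) ↦ hω.le
    _ ≤ ENNReal.ofReal (Var[X; μ] / c ^ 2) := meas_ge_le_variance_div_sq hX hc
    _ ≤ ENNReal.ofReal r := ENNReal.ofReal_le_ofReal <| (div_le_iff₀ (by positivity)).2 hvar

lemma measure_lt_abs_sampleMean_sub_le {α : Type*} [Fintype α] [MeasurableSpace α]
    [MeasurableSingletonClass α] {N : ℕ} (hN : 0 < N) {U : Fin N → Ω → α}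
    (hU : ∀ t, Measurable (U t)) (hindep : iIndepFun U μ) {p : α → ℝ}
    (hp : ∀ t a, μ.real (U t ⁻¹' {a}) = p a) (g : α → ℝ) {c r : ℝ} (hc : 0 ≤ c)
    (hg : ∑ a, p a * g a ^ 2 ≤ r * N * c ^ 2) :
    μ {ω | c < |(N : ℝ)⁻¹ * ∑ t, g (U t ω) - ∑ a, p a * g a|} ≤ ENNReal.ofReal r := by
  have hmoment (t : Fin N) (h : α → ℝ) : μ[fun ω ↦ h (U t ω)] = ∑ a, p a * h a := by
    simp [integral_comp_eq_sum_measureReal (hU t), hp]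
  have hL2 (t : Fin N) : MemLp (fun ω ↦ g (U t ω)) 2 μ :=
    (memLp_map_measure_iff (by fun_prop) (hU t).aemeasurable).1 MemLp.of_discrete
  have hmean : μ[fun ω ↦ (N : ℝ)⁻¹ * ∑ t, g (U t ω)] = ∑ a, p a * g a := by
    rw [integral_const_mul, integral_finsetSum _ fun t _ ↦ (hL2 t).integrable one_le_two]
    simp only [hmoment, sum_const, card_univ, Fintype.card_fin, nsmul_eq_mul]
    field_simp
  have hvar : Var[fun ω ↦ (N : ℝ)⁻¹ * ∑ t, g (U t ω); μ] ≤ r * c ^ 2 := by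
    have h := variance_mean_le hL2 (fun t t' htt' ↦ (hindep.indepFun htt').comp
      (measurable_of_finite g) (measurable_of_finite g)) (V := ∑ a, p a * g a ^ 2) fun t ↦
        (variance_le_expectation_sq (hL2 t).1).trans_eq (hmoment t fun a ↦ g a ^ 2)
    rw [Fintype.card_fin] at h
    refine h.trans ?_
    rw [div_le_iff₀ (by exact_mod_cast hN)]
    linarith
  simpa only [hmean] using measure_lt_abs_sub_integral_le
    ((memLp_finsetSum _ fun t _ ↦ hL2 t).const_mul _) hc hvar

lemma ofReal_one_sub_le_of_measure_compl_le {s : Set Ω} {q : ℝ} (hq : 0 ≤ q)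
    (h : μ sᶜ ≤ ENNReal.ofReal q) :
    ENNReal.ofReal (1 - q) ≤ μ s := by
  have hcover : 1 ≤ μ s + μ sᶜ := by
    simpa [measure_univ, Set.union_compl_self] using measure_union_le (μ := μ) s sᶜ
  calc ENNReal.ofReal (1 - q) ≤ 1 - ENNReal.ofReal q := by
        rw [ENNReal.ofReal_sub _ hq, ENNReal.ofReal_one]
    _ ≤ μ s := tsub_le_iff_right.2 (hcover.trans (by gcongr))

end Probability

def IsMedian {m : ℕ} (v : Fin m → ℝ) (y : ℝ) : Prop :=
  ⌈(m : ℝ) / 2⌉₊ ≤ #{j | v j ≤ y} ∧ ⌈(m : ℝ) / 2⌉₊ ≤ #{j | y ≤ v j}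

lemma exists_abs_sub_le_of_card_lt {ι : Type*} [Fintype ι] {P : ι → Prop} [DecidablePred P]
    {v : ι → ℝ} {s c : ℝ} (hP : #{i | c < |v i - s|} < #{i | P i}) :
    ∃ i, P i ∧ |v i - s| ≤ c := by
  obtain ⟨i, hi, hfar⟩ := exists_mem_notMem_of_card_lt_card hP
  simp only [mem_filter, mem_univ, true_and, not_lt] at hi hfar
  exact ⟨i, hi, hfar⟩

lemma IsMedian.abs_sub_le {m : ℕ} {v : Fin m → ℝ} {y : ℝ} (h : IsMedian v y) {s c : ℝ}
    (hfar : #{j | c < |v j - s|} < ⌈(m : ℝ) / 2⌉₊) : |y - s| ≤ c := by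
  obtain ⟨j₁, hj₁, hc₁⟩ := exists_abs_sub_le_of_card_lt (hfar.trans_le h.1)
  obtain ⟨j₂, hj₂, hc₂⟩ := exists_abs_sub_le_of_card_lt (hfar.trans_le h.2)
  rw [abs_le] at hc₁ hc₂ ⊢
  constructor <;> linarith

lemma le_two_mul_ceil_half (m : ℕ) : m ≤ 2 * ⌈(m : ℝ) / 2⌉₊ := by
  have := Nat.le_ceil ((m : ℝ) / 2)
  exact_mod_cast (by linarith : (m : ℝ) ≤ 2 * ⌈(m : ℝ) / 2⌉₊)

lemma choose_mul_inv_nine_pow_le {m k : ℕ} (hk : m ≤ 2 * k) :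
    (m.choose k : ℝ) * (1 / 9) ^ k ≤ (2 / 3) ^ m := by
  calc (m.choose k : ℝ) * (1 / 9) ^ k = (m.choose k : ℝ) * (1 / 3) ^ (2 * k) := by
        rw [pow_mul]; norm_num
    _ ≤ 2 ^ m * (1 / 3) ^ m :=
        mul_le_mul (mod_cast m.choose_le_two_pow k)
          (pow_le_pow_of_le_one (by norm_num) (by norm_num) hk) (by positivity) (by positivity)
    _ = (2 / 3) ^ m := by rw [← mul_pow]; norm_num

lemma two_thirds_pow_le {δ : ℝ} (hδ : 0 < δ) {m : ℕ} (hm : 6 * Real.log (2 / δ) ≤ m) :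
    (2 / 3 : ℝ) ^ m ≤ δ / 2 := by
  have hlog : Real.log (2 / δ) ≤ m / 3 := by
    have : (0 : ℝ) ≤ m := m.cast_nonneg
    rcases le_or_gt 0 (Real.log (2 / δ)) with h | h <;> linarith
  have h23 : (2 / 3 : ℝ) ≤ Real.exp (-(1 / 3)) := by
    rw [← Real.log_le_iff_le_exp (by norm_num)]
    linarith [Real.log_le_sub_one_of_pos (x := 2 / 3) (by norm_num)]
  calc (2 / 3 : ℝ) ^ m ≤ Real.exp (-(1 / 3)) ^ m := by gcongr
    _ = Real.exp (-(m / 3)) := by rw [← Real.exp_nat_mul]; ring_nf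
    _ ≤ Real.exp (-Real.log (2 / δ)) := by gcongr
    _ = δ / 2 := by rw [Real.exp_neg, Real.exp_log (by positivity), inv_div]

section MedianOfMeans

variable {Ω : Type*} [MeasurableSpace Ω] {μ : Measure Ω} [IsProbabilityMeasure μ]

variable {α : Type*} [Fintype α] [MeasurableSpace α] [MeasurableSingletonClass α]
  {N m : ℕ} {U : Fin m → Fin N → Ω → α} {p : α → ℝ}

lemma measure_le_card_far_groupMeans_le (hN : 0 < N) (hU : ∀ j t, Measurable (U j t))
    (hindep : iIndepFun (fun jt : Fin m × Fin N ↦ U jt.1 jt.2) μ)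
    (hp : ∀ j t a, μ.real (U j t ⁻¹' {a}) = p a) (g : α → ℝ) {c : ℝ} (hc : 0 ≤ c)
    (hg : 9 * ∑ a, p a * g a ^ 2 ≤ N * c ^ 2) {k : ℕ} (hk : m ≤ 2 * k) :
    μ {ω | k ≤ #{j | c < |(N : ℝ)⁻¹ * ∑ t, g (U j t ω) - ∑ a, p a * g a|}} ≤
      ENNReal.ofReal ((2 / 3) ^ m) := by
  set B : Set (Fin N → α) := {w | c < |(N : ℝ)⁻¹ * ∑ t, g (w t) - ∑ a, p a * g a|}
  have hgroup (j : Fin m) : μ ((fun ω t ↦ U j t ω) ⁻¹' B) ≤ ENNReal.ofReal (1 / 9) :=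
    measure_lt_abs_sampleMean_sub_le hN (hU j) (hindep.precomp (g := Prod.mk j)
      (Prod.mk_right_injective j)) (hp j) g hc (by linarith)
  calc μ {ω | k ≤ #{j | c < |(N : ℝ)⁻¹ * ∑ t, g (U j t ω) - ∑ a, p a * g a|}}
      ≤ (Fintype.card (Fin m)).choose k * ENNReal.ofReal (1 / 9) ^ k :=
        (hindep.curry hU).measure_le_card_mem_le (Set.to_countable B).measurableSet hgroup k
    _ = ENNReal.ofReal ((m.choose k : ℝ) * (1 / 9) ^ k) := by
        rw [ENNReal.ofReal_mul (by positivity), ENNReal.ofReal_pow (by norm_num),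
          ENNReal.ofReal_natCast, Fintype.card_fin]
    _ ≤ ENNReal.ofReal ((2 / 3) ^ m) := ENNReal.ofReal_le_ofReal (choose_mul_inv_nine_pow_le hk)

theorem measure_norm_sub_le_of_isMedian (hN : 0 < N) (hU : ∀ j t, Measurable (U j t))
    (hindep : iIndepFun (fun jt : Fin m × Fin N ↦ U jt.1 jt.2) μ)
    (hp : ∀ j t a, μ.real (U j t ⁻¹' {a}) = p a) (hp0 : ∀ a, 0 ≤ p a) (F : α → ℂ) {c : ℝ}
    (hc : 0 ≤ c) (hF : 9 * ∑ a, p a * ‖F a‖ ^ 2 ≤ N * c ^ 2) (G : Fin m → Ω → ℂ)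
    (hG : ∀ j ω, G j ω = (N : ℂ)⁻¹ * ∑ t, F (U j t ω)) (Y : Ω → ℂ)
    (hYre : ∀ ω, IsMedian (fun j ↦ (G j ω).re) (Y ω).re)
    (hYim : ∀ ω, IsMedian (fun j ↦ (G j ω).im) (Y ω).im) :
    ENNReal.ofReal (1 - 2 * (2 / 3) ^ m) ≤
      μ {ω | ‖Y ω - ∑ a, (p a : ℂ) * F a‖ ≤ √2 * c} := by
  set S := ∑ a, (p a : ℂ) * F a
  set k := ⌈(m : ℝ) / 2⌉₊
  have hfar (L : ℂ →ₗ[ℝ] ℝ) (hL : ∀ z, |L z| ≤ ‖z‖) :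
      μ {ω | k ≤ #{j | c < |L (G j ω) - L S|}} ≤ ENNReal.ofReal ((2 / 3) ^ m) := by
    have hmoment : 9 * ∑ a, p a * L (F a) ^ 2 ≤ N * c ^ 2 := by
      refine le_trans ?_ hF
      gcongr 9 * ∑ a, p a * ?_ with a
      · exact hp0 a
      · exact sq_le_sq' (abs_le.1 (hL _)).1 (abs_le.1 (hL _)).2
    convert measure_le_card_far_groupMeans_le hN hU hindep hp (fun a ↦ L (F a)) hc hmoment
      (le_two_mul_ceil_half m) using 6 with ω j
    have hscale (r : ℝ) (z : ℂ) : L (r * z) = r * L z := by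
      rw [← Complex.real_smul, map_smul, smul_eq_mul]
    simp only [hG, S, map_sum, ← Complex.ofReal_natCast, ← Complex.ofReal_inv, hscale]
  refine ofReal_one_sub_le_of_measure_compl_le (by positivity) ?_
  have hcover : {ω | ‖Y ω - S‖ ≤ √2 * c}ᶜ ⊆
      {ω | k ≤ #{j | c < |Complex.reLm (G j ω) - Complex.reLm S|}} ∪
        {ω | k ≤ #{j | c < |Complex.imLm (G j ω) - Complex.imLm S|}} := by
    intro ω hω
    by_contra hgood
    simp only [Set.mem_union, Set.mem_ofPred_eq, not_or, not_le] at hgood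
    have hre := (hYre ω).abs_sub_le hgood.1
    have him := (hYim ω).abs_sub_le hgood.2
    refine hω ((Complex.norm_le_sqrt_two_mul_max _).trans ?_)
    gcongr
    exact max_le (by simpa using hre) (by simpa using him)
  calc μ {ω | ‖Y ω - S‖ ≤ √2 * c}ᶜ
      ≤ ENNReal.ofReal ((2 / 3) ^ m) + ENNReal.ofReal ((2 / 3) ^ m) :=
        (measure_mono hcover).trans <| (measure_union_le _ _).trans <|
          add_le_add (hfar _ Complex.abs_re_le_norm) (hfar _ Complex.abs_im_le_norm)
    _ = ENNReal.ofReal (2 * (2 / 3) ^ m) := by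
        rw [← ENNReal.ofReal_add (by positivity) (by positivity), two_mul]

end MedianOfMeans

section Estimator

variable {ι : Type*} [Fintype ι]

noncomputable def ell2Weight (x : ι → ℂ) (s : ι) : ℝ := ‖x s‖ ^ 2 / ∑ u, ‖x u‖ ^ 2

-- At `x s = 0` the division by zero gives `0`; such indices are drawn with probability `0`.
noncomputable def importanceSample (x y : ι → ℂ) (s : ι) : ℂ :=
  starRingEnd ℂ (x s) * y s * (((∑ u, ‖x u‖ ^ 2 : ℝ) : ℂ) / ((‖x s‖ ^ 2 : ℝ) : ℂ))

lemma ell2Weight_nonneg (x : ι → ℂ) (s : ι) : 0 ≤ ell2Weight x s := by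
  unfold ell2Weight; positivity

lemma ell2Weight_mul_importanceSample (x y : ι → ℂ) (s : ι) :
    (ell2Weight x s : ℂ) * importanceSample x y s = starRingEnd ℂ (x s) * y s := by
  rcases eq_or_ne (x s) 0 with hs | hs
  · simp [ell2Weight, hs]
  have ha : (∑ u, ‖x u‖ ^ 2 : ℝ) ≠ 0 :=
    (sum_pos' (fun u _ ↦ by positivity) ⟨s, mem_univ s, by positivity⟩).ne'
  have ha' : (∑ u, (‖x u‖ : ℂ) ^ 2) ≠ 0 := by exact_mod_cast ha
  have hxs : (‖x s‖ : ℂ) ≠ 0 := by exact_mod_cast norm_ne_zero_iff.2 hs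
  simp only [ell2Weight, importanceSample]
  push_cast
  field_simp

lemma ell2Weight_mul_norm_importanceSample_sq_le (x y : ι → ℂ) (s : ι) :
    ell2Weight x s * ‖importanceSample x y s‖ ^ 2 ≤ (∑ u, ‖x u‖ ^ 2) * ‖y s‖ ^ 2 := by
  rcases eq_or_ne (x s) 0 with hs | hs
  · simp [ell2Weight, hs]; positivity
  have ha : (∑ u, ‖x u‖ ^ 2 : ℝ) ≠ 0 :=
    (sum_pos' (fun u _ ↦ by positivity) ⟨s, mem_univ s, by positivity⟩).ne'
  have hxs : ‖x s‖ ≠ 0 := norm_ne_zero_iff.2 hs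
  simp only [ell2Weight, importanceSample, norm_mul, norm_div, Complex.norm_conj,
    Complex.norm_real, Real.norm_eq_abs]
  rw [abs_of_nonneg (by positivity : (0 : ℝ) ≤ ‖x s‖ ^ 2),
    abs_of_nonneg (by positivity : (0 : ℝ) ≤ ∑ u, ‖x u‖ ^ 2)]
  field_simp
  exact le_rfl

end Estimator

theorem stmt2_general {Ω : Type*} [MeasurableSpace Ω] (μ : Measure Ω) [IsProbabilityMeasure μ]
    (n : ℕ) (x y : Fin n → ℂ)
    (ε δ : ℝ) (hε : ε ∈ Set.Ioo (0:ℝ) 1) (hδ : δ ∈ Set.Ioo (0:ℝ) 1)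
    (n₀ m : ℕ) (hn₀ : n₀ = ⌈(9:ℝ) / ε ^ 2⌉₊) (hm : m = ⌈(6:ℝ) * Real.log (2 / δ)⌉₊)
    (idx : Fin m → Fin n₀ → Ω → Fin n)
    (hmeas : ∀ j t, Measurable (idx j t))
    (hindep : iIndepFun
      (fun jt : Fin m × Fin n₀ => idx jt.1 jt.2) μ)
    (hdist : ∀ j t (s : Fin n),
      μ (idx j t ⁻¹' {s}) = ENNReal.ofReal (‖x s‖ ^ 2 / ∑ u, ‖x u‖ ^ 2))
    (z : Fin m → Fin n₀ → Ω → ℂ)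
    (hz : ∀ j t ω, z j t ω = (starRingEnd ℂ) (x (idx j t ω)) * y (idx j t ω) *
      (((∑ u, ‖x u‖ ^ 2 : ℝ) : ℂ) / ((‖x (idx j t ω)‖ ^ 2 : ℝ) : ℂ)))
    (Yg : Fin m → Ω → ℂ) (hYg : ∀ j ω, Yg j ω = (1 / (n₀ : ℂ)) * ∑ t, z j t ω)
    (Y : Ω → ℂ)
    (hrele : ∀ ω, ⌈(m : ℝ) / 2⌉₊ ≤ (univ.filter (fun j : Fin m => (Yg j ω).re ≤ (Y ω).re)).card)
    (hrege : ∀ ω, ⌈(m : ℝ) / 2⌉₊ ≤ (univ.filter (fun j : Fin m => (Y ω).re ≤ (Yg j ω).re)).card)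
    (himle : ∀ ω, ⌈(m : ℝ) / 2⌉₊ ≤ (univ.filter (fun j : Fin m => (Yg j ω).im ≤ (Y ω).im)).card)
    (himge : ∀ ω, ⌈(m : ℝ) / 2⌉₊ ≤ (univ.filter (fun j : Fin m => (Y ω).im ≤ (Yg j ω).im)).card) :
    ENNReal.ofReal (1 - δ) ≤
      μ {ω | ‖Y ω - ∑ s, (starRingEnd ℂ) (x s) * y s‖ ≤
        ε * Real.sqrt 2 * Real.sqrt (∑ s, ‖x s‖ ^ 2) * Real.sqrt (∑ s, ‖y s‖ ^ 2)} := by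
  set c := ε * √(∑ s, ‖x s‖ ^ 2) * √(∑ s, ‖y s‖ ^ 2)
  have hn₀ε : 9 ≤ (n₀ : ℝ) * ε ^ 2 := by
    have := Nat.le_ceil ((9 : ℝ) / ε ^ 2)
    rwa [← hn₀, div_le_iff₀ (by nlinarith [hε.1])] at this
  have hmoment : 9 * ∑ s, ell2Weight x s * ‖importanceSample x y s‖ ^ 2 ≤ n₀ * c ^ 2 :=
    calc 9 * ∑ s, ell2Weight x s * ‖importanceSample x y s‖ ^ 2
        ≤ 9 * ((∑ s, ‖x s‖ ^ 2) * ∑ s, ‖y s‖ ^ 2) := by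
          gcongr 9 * ?_
          rw [mul_sum]
          exact sum_le_sum fun s _ ↦ ell2Weight_mul_norm_importanceSample_sq_le x y s
      _ ≤ n₀ * ε ^ 2 * ((∑ s, ‖x s‖ ^ 2) * ∑ s, ‖y s‖ ^ 2) := by gcongr
      _ = n₀ * c ^ 2 := by
          rw [mul_pow, mul_pow, Real.sq_sqrt (by positivity), Real.sq_sqrt (by positivity)]
          ring
  have hbound := measure_norm_sub_le_of_isMedian (μ := μ)
    (hn₀ ▸ Nat.ceil_pos.2 (by have := hε.1; positivity)) hmeas hindep
    (fun j t s ↦ by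
      rw [measureReal_def, hdist]; exact ENNReal.toReal_ofReal (ell2Weight_nonneg x s))
    (ell2Weight_nonneg x) (importanceSample x y) (by have := hε.1; positivity) hmoment Yg
    (fun j ω ↦ by simp [hYg, hz, importanceSample]) Y
    (fun ω ↦ ⟨hrele ω, hrege ω⟩) (fun ω ↦ ⟨himle ω, himge ω⟩)
  simp only [ell2Weight_mul_importanceSample] at hbound
  rw [show ε * √2 * √(∑ s, ‖x s‖ ^ 2) * √(∑ s, ‖y s‖ ^ 2) = √2 * c by ring]
  refine le_trans (ENNReal.ofReal_le_ofReal ?_) hbound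
  linarith [two_thirds_pow_le hδ.1 (hm ▸ Nat.le_ceil _)]

/-- the full inner-product estimator. With `n₀ = ⌈9/ε²⌉`,
`m = ⌈6 log(2/δ)⌉`, i.i.d. indices `i j t` drawn from the ℓ²-sampling distribution of
a nonzero `x ∈ ℂ^n`, sample values `z j t = conj(x_{i j t}) y_{i j t} ‖x‖²/|x_{i j t}|²`,
group means `Yg j`, and `Y` formed by componentwise medians (real and imaginary parts),
we have `P(|Y − ⟨x,y⟩| ≤ ε √2 ‖x‖ ‖y‖) ≥ 1 − δ`. -/
theorem stmt2 {Ω : Type*} [MeasurableSpace Ω] (μ : Measure Ω) [IsProbabilityMeasure μ]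
    (n : ℕ) (x y : Fin n → ℂ) (hx : x ≠ 0)
    (ε δ : ℝ) (hε : ε ∈ Set.Ioo (0:ℝ) 1) (hδ : δ ∈ Set.Ioo (0:ℝ) 1)
    (n₀ m : ℕ) (hn₀ : n₀ = ⌈(9:ℝ) / ε ^ 2⌉₊) (hm : m = ⌈(6:ℝ) * Real.log (2 / δ)⌉₊)
    (idx : Fin m → Fin n₀ → Ω → Fin n)
    (hmeas : ∀ j t, Measurable (idx j t))
    (hindep : iIndepFun
      (fun jt : Fin m × Fin n₀ => idx jt.1 jt.2) μ)
    (hdist : ∀ j t (s : Fin n),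
      μ (idx j t ⁻¹' {s}) = ENNReal.ofReal (‖x s‖ ^ 2 / ∑ u, ‖x u‖ ^ 2))
    (z : Fin m → Fin n₀ → Ω → ℂ)
    (hz : ∀ j t ω, z j t ω = (starRingEnd ℂ) (x (idx j t ω)) * y (idx j t ω) *
      (((∑ u, ‖x u‖ ^ 2 : ℝ) : ℂ) / ((‖x (idx j t ω)‖ ^ 2 : ℝ) : ℂ)))
    (Yg : Fin m → Ω → ℂ) (hYg : ∀ j ω, Yg j ω = (1 / (n₀ : ℂ)) * ∑ t, z j t ω)
    (Y : Ω → ℂ)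
    (hrele : ∀ ω, ⌈(m : ℝ) / 2⌉₊ ≤ (univ.filter (fun j : Fin m => (Yg j ω).re ≤ (Y ω).re)).card)
    (hrege : ∀ ω, ⌈(m : ℝ) / 2⌉₊ ≤ (univ.filter (fun j : Fin m => (Y ω).re ≤ (Yg j ω).re)).card)
    (himle : ∀ ω, ⌈(m : ℝ) / 2⌉₊ ≤ (univ.filter (fun j : Fin m => (Yg j ω).im ≤ (Y ω).im)).card)
    (himge : ∀ ω, ⌈(m : ℝ) / 2⌉₊ ≤ (univ.filter (fun j : Fin m => (Y ω).im ≤ (Yg j ω).im)).card) :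
    ENNReal.ofReal (1 - δ) ≤
      μ {ω | ‖Y ω - ∑ s, (starRingEnd ℂ) (x s) * y s‖ ≤
        ε * Real.sqrt 2 * Real.sqrt (∑ s, ‖x s‖ ^ 2) * Real.sqrt (∑ s, ‖y s‖ ^ 2)} :=
  stmt2_general μ n x y ε δ hε hδ n₀ m hn₀ hm idx hmeas hindep hdist z hz Yg hYg Y hrele hrege himle
    himge
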